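/- Let P : Herm(n) → ℝ be a coherent prevision. Then D_P := {A ∈ Herm(n) : P(A) > 0} is a coherent set of desirable measurements, and for every A ∈ Herm(n): sup{α ∈ ℝ : A − α·1 ∈ D_P} = P(A) = inf{α ∈ ℝ : α·1 − A ∈ D_P}, where 1 is the identity matrix. -/
import Mathlib

open scoped Pointwise ComplexOrder Matrix

/-- The real vector space of n×n complex Hermitian matrices. -/
abbrev Herm (n : ℕ) : Type := selfAdjoint (Matrix (Fin n) (Fin n) ℂ)

/-- The smallest eigenvalue of a Hermitian matrix. -/
noncomputable def lamMin {n : ℕ} (A : Herm n) : ℝ :=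
  ⨅ i, (Matrix.IsHermitian.eigenvalues
    (A.prop : Matrix.IsHermitian (A : Matrix (Fin n) (Fin n) ℂ))) i

/-- The identity matrix, as an element of `Herm n`. -/
noncomputable def hermOne (n : ℕ) : Herm n := ⟨1, IsSelfAdjoint.one _⟩

/-- A coherent set of desirable measurements (D1–D5). -/
def Coherent {n : ℕ} (D : Set (Herm n)) : Prop :=
  (∀ A ∈ D, ¬ Matrix.PosSemidef ((-A : Herm n) : Matrix (Fin n) (Fin n) ℂ)) ∧
  (∀ A : Herm n, Matrix.PosDef (A : Matrix (Fin n) (Fin n) ℂ) → A ∈ D) ∧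
  (∀ A B : Herm n, A ∈ D →
    Matrix.PosSemidef ((B - A : Herm n) : Matrix (Fin n) (Fin n) ℂ) → B ∈ D) ∧
  (∀ A B : Herm n, A ∈ D → B ∈ D → A + B ∈ D) ∧
  (∀ A : Herm n, ∀ c : ℝ, A ∈ D → 0 < c → c • A ∈ D)

/-- All finite positive linear combinations of elements of `S`. -/
def posi {n : ℕ} (S : Set (Herm n)) : Set (Herm n) :=
  {A | ∃ r : ℕ, 0 < r ∧ ∃ (c : Fin r → ℝ) (B : Fin r → Herm n),
    (∀ k, 0 < c k) ∧ (∀ k, B k ∈ S) ∧ A = ∑ k, c k • B k}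

/-- A density operator: a Hermitian positive semidefinite matrix with trace 1. -/
def IsDensity {n : ℕ} (ρ : Matrix (Fin n) (Fin n) ℂ) : Prop :=
  ρ.IsHermitian ∧ ρ.PosSemidef ∧ ρ.trace = 1

/-- Eigenvalues of a matrix equal to `c • 1` are all `c`. -/
lemma eig_smul_one {n : ℕ} {A : Matrix (Fin n) (Fin n) ℂ} (c : ℝ)
    (h : A.IsHermitian) (hA : A = (c : ℂ) • (1 : Matrix (Fin n) (Fin n) ℂ)) (i : Fin n) :
    h.eigenvalues i = c := by
  subst hA
  have hv := h.mulVec_eigenvectorBasis i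
  rw [Matrix.smul_mulVec, Matrix.one_mulVec] at hv
  have hne : (⇑(h.eigenvectorBasis i) : Fin n → ℂ) ≠ 0 := by
    have := h.eigenvectorBasis.orthonormal.ne_zero i
    intro hc
    apply this
    ext j
    exact congrFun hc j
  obtain ⟨j, hj⟩ := Function.ne_iff.mp hne
  have := congrFun hv j
  simp only [Pi.smul_apply, smul_eq_mul, Complex.real_smul] at this
  have hcc : (c : ℂ) = (h.eigenvalues i : ℂ) := mul_right_cancel₀ hj this
  exact (Complex.ofReal_inj.mp hcc).symm

lemma lamMin_nonneg {n : ℕ} (hn : 1 ≤ n) {A : Herm n}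
    (h : Matrix.PosSemidef (A : Matrix (Fin n) (Fin n) ℂ)) : 0 ≤ lamMin A := by
  have : Nonempty (Fin n) := ⟨⟨0, hn⟩⟩
  exact le_ciInf fun i => h.eigenvalues_nonneg i

lemma lamMin_pos {n : ℕ} (hn : 1 ≤ n) {A : Herm n}
    (h : Matrix.PosDef (A : Matrix (Fin n) (Fin n) ℂ)) : 0 < lamMin A := by
  have : Nonempty (Fin n) := ⟨⟨0, hn⟩⟩
  obtain ⟨i, hi⟩ := Finite.exists_min
    (Matrix.IsHermitian.eigenvalues (A.prop : Matrix.IsHermitian _))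
  exact lt_of_lt_of_le (h.eigenvalues_pos i) (le_ciInf hi)

lemma lamMin_smul_one {n : ℕ} (hn : 1 ≤ n) (c : ℝ) (B : Herm n)
    (hB : (B : Matrix (Fin n) (Fin n) ℂ) = (c : ℂ) • 1) : lamMin B = c := by
  have : Nonempty (Fin n) := ⟨⟨0, hn⟩⟩
  unfold lamMin
  have : ∀ i, (Matrix.IsHermitian.eigenvalues
      (B.prop : Matrix.IsHermitian (B : Matrix (Fin n) (Fin n) ℂ))) i = c :=
    fun i => eig_smul_one c _ hB i
  simp [this]

/-- The strictly desirable measurements `D_P = {A : P A > 0}` of a coherent prevision `P`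
form a coherent set of desirable measurements, whose lower and upper price functionals
both coincide with `P`. -/
theorem prevision_desirset_coherent (n : ℕ) (hn : 1 ≤ n) (P : Herm n →ₗ[ℝ] ℝ)
    (hP : ∀ A : Herm n, lamMin A ≤ P A) :
    Coherent {A : Herm n | 0 < P A} ∧
    ∀ A : Herm n,
      sSup {α : ℝ | A - α • hermOne n ∈ {B : Herm n | 0 < P B}} = P A ∧
      P A = sInf {α : ℝ | α • hermOne n - A ∈ {B : Herm n | 0 < P B}} := by
  have hPSD : ∀ A : Herm n, Matrix.PosSemidef (A : Matrix (Fin n) (Fin n) ℂ) → 0 ≤ P A :=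
    fun A h => le_trans (lamMin_nonneg hn h) (hP A)
  have hone : lamMin (hermOne n) = 1 := by
    apply lamMin_smul_one hn
    simp [hermOne]
  have hnegone : lamMin (-(hermOne n)) = -1 := by
    apply lamMin_smul_one hn
    push_cast
    simp [hermOne]
  have hP1 : P (hermOne n) = 1 := by
    have h1 := hP (hermOne n)
    have h2 := hP (-(hermOne n))
    rw [hone] at h1
    rw [hnegone, map_neg] at h2
    linarith
  constructor
  · refine ⟨?_, ?_, ?_, ?_, ?_⟩
    · intro A hA hPS
      have := hPSD (-A) hPS
      rw [map_neg] at this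
      simp only [Set.mem_setOf_eq] at hA
      linarith
    · intro A hPD
      exact lt_of_lt_of_le (lamMin_pos hn hPD) (hP A)
    · intro A B hA hPS
      have h1 := hPSD (B - A) hPS
      rw [map_sub] at h1
      simp only [Set.mem_setOf_eq] at hA ⊢
      linarith
    · intro A B hA hB
      simp only [Set.mem_setOf_eq, map_add] at *
      linarith
    · intro A c hA hc
      simp only [Set.mem_setOf_eq, map_smul, smul_eq_mul] at *
      positivity
  · intro A
    have hs1 : {α : ℝ | A - α • hermOne n ∈ {B : Herm n | 0 < P B}} = Set.Iio (P A) := by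
      ext α
      simp [Set.mem_setOf_eq, map_sub, map_smul, hP1, sub_pos]
    have hs2 : {α : ℝ | α • hermOne n - A ∈ {B : Herm n | 0 < P B}} = Set.Ioi (P A) := by
      ext α
      simp [Set.mem_setOf_eq, map_sub, map_smul, hP1, sub_pos]
    rw [hs1, hs2, csSup_Iio, csInf_Ioi]
    exact ⟨rfl, rfl⟩
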